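/- With notation as above, if s ≤ s^J(I) (the limit of μ_J^I(p^e)/p^e), then h_s(I,J;M) = (s^d/d!)·e(I;M); and if s ≥ c^J(I) (the F-threshold), then h_s(I,J;M) = e_HK(J;M). -/

import Mathlib

open Filter

/-- The `q`-th Frobenius power of an ideal: the ideal generated by `q`-th powers of
elements of `J`. -/
def frobPow {R : Type*} [CommRing R] (J : Ideal R) (q : ℕ) : Ideal R :=
  Ideal.span ((fun x => x ^ q) '' (J : Set R))

/-- The length of the `R`-module `M/NM` (as a real number), where length is the
supremum of lengths of chains of submodules of `M/NM`. -/
noncomputable def quotLen (R M : Type*) [CommRing R] [AddCommGroup M] [Module R M]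
    (N : Ideal R) : ℝ :=
  (((Order.krullDim (Submodule R (M ⧸ (N • (⊤ : Submodule R M))))).unbotD 0).toNat : ℝ)

/-! Both equalities come from squeezing `ℓ(M/(I^{n_e} + J^{[q]})M)`, where `q = p^e` and
`n_e = ⌈s q⌉`. From above it is bounded by `ℓ(M/I^{n_e}M)` and by `ℓ(M/J^{[q]}M)`.
If `s ≤ s^J(I)`, then `J^{[q]} ⊆ I^{m_e}` with `m_e = min(n_e, μ_e - 1)`, so the length is at
least `ℓ(M/I^{m_e}M)`. If `s ≥ c^J(I)`, then `I^{n'_e} ⊆ J^{[q]}` with `n'_e = max(n_e, ν_e + 1)`,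
and additivity of length on `A' ⊆ A ∩ B` gives
`ℓ(M/BM) + ℓ(M/AM) ≤ ℓ(M/(A+B)M) + ℓ(M/A'M)`, a lower bound by
`ℓ(M/J^{[q]}M) + ℓ(M/I^{n_e}M) - ℓ(M/I^{n'_e}M)`. As `m_e/q`, `n_e/q` and `n'_e/q` all tend
to `s`, the Hilbert–Samuel asymptotics send every `ℓ(M/I^{•}M)/q^d` here to `s^d e(I;M)/d!`. -/

open Topology IsLocalRing

namespace Submodule

variable {R M : Type*} [Ring R] [AddCommGroup M] [Module R M]

theorem length_quotient_eq_length_map_mkQ_add {N₀ N : Submodule R M} (h : N₀ ≤ N) :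
    Module.length R (M ⧸ N₀) =
      Module.length R (N.map N₀.mkQ) + Module.length R (M ⧸ N) := by
  rw [Module.length_eq_add_of_exact _ _ (N.map N₀.mkQ).injective_subtype
      (N.map N₀.mkQ).mkQ_surjective (LinearMap.exact_subtype_mkQ _),
    (quotientQuotientEquivQuotient N₀ N h).length_eq]

theorem length_quotient_add_length_quotient_le {N₀ A B : Submodule R M} (hA : N₀ ≤ A)
    (hB : N₀ ≤ B) :
    Module.length R (M ⧸ B) + Module.length R (M ⧸ A) ≤
      Module.length R (M ⧸ (A ⊔ B)) + Module.length R (M ⧸ N₀) := by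
  have hmap : (A ⊔ B).map B.mkQ = (A.map N₀.mkQ).map (factor hB) := by
    rw [← Submodule.map_comp, factor_comp_mk, map_sup, mkQ_map_self, sup_bot_eq]
  have hle : Module.length R ((A ⊔ B).map B.mkQ) ≤ Module.length R (A.map N₀.mkQ) := by
    rw [hmap]
    exact Module.length_le_of_surjective _ (LinearMap.submoduleMap_surjective _ _)
  rw [length_quotient_eq_length_map_mkQ_add (le_sup_right : B ≤ A ⊔ B),
    length_quotient_eq_length_map_mkQ_add hA, add_comm _ (Module.length R (M ⧸ (A ⊔ B))),
    add_assoc]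
  gcongr

end Submodule

section QuotLen

variable {R M : Type*} [CommRing R] [AddCommGroup M] [Module R M]

theorem quotLen_eq_toNat (K : Ideal R) :
    quotLen R M K = (Module.length R (M ⧸ K • (⊤ : Submodule R M))).toNat := by
  rw [quotLen, ← Module.coe_length, WithBot.unbotD_coe]

theorem length_quotient_smul_top_le_of_le {K K' : Ideal R} (h : K ≤ K') :
    Module.length R (M ⧸ K' • (⊤ : Submodule R M)) ≤
      Module.length R (M ⧸ K • (⊤ : Submodule R M)) :=
  Module.length_le_of_surjective _ (Submodule.factor_surjective (Submodule.smul_mono_left h))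

theorem quotLen_le_quotLen_of_le {K K' : Ideal R} (h : K ≤ K')
    (hK : Module.length R (M ⧸ K • (⊤ : Submodule R M)) ≠ ⊤) :
    quotLen R M K' ≤ quotLen R M K := by
  rw [quotLen_eq_toNat, quotLen_eq_toNat]
  exact_mod_cast ENat.toNat_le_toNat (length_quotient_smul_top_le_of_le h) hK

theorem quotLen_add_quotLen_le {A B A' : Ideal R} (hA : A' ≤ A) (hB : A' ≤ B)
    (hA' : Module.length R (M ⧸ A' • (⊤ : Submodule R M)) ≠ ⊤) :
    quotLen R M B + quotLen R M A ≤ quotLen R M (A + B) + quotLen R M A' := by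
  have key := Submodule.length_quotient_add_length_quotient_le (M := M)
    (Submodule.smul_mono_left hA (N := ⊤)) (Submodule.smul_mono_left hB (N := ⊤))
  rw [← Submodule.sup_smul, ← Ideal.add_eq_sup] at key
  have hfin : ∀ {K : Ideal R}, A' ≤ K → Module.length R (M ⧸ K • (⊤ : Submodule R M)) ≠ ⊤ :=
    fun h => ne_top_of_le_ne_top hA' (length_quotient_smul_top_le_of_le h)
  have hAB : A' ≤ A + B := hA.trans le_sup_left
  simp only [quotLen_eq_toNat]
  have := ENat.toNat_le_toNat key (WithTop.add_ne_top.2 ⟨hfin hAB, hA'⟩)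
  rw [ENat.toNat_add (hfin hB) (hfin hA), ENat.toNat_add (hfin hAB) hA'] at this
  exact_mod_cast this

end QuotLen

namespace Ideal

variable {R : Type*} [CommRing R]

theorem radical_le_radical_pow (I : Ideal R) (n : ℕ) : I.radical ≤ (I ^ n).radical := by
  rcases n.eq_zero_or_pos with rfl | hn
  · simp [radical_top]
  · rw [radical_pow I hn.ne']

theorem radical_le_radical_frobPow (J : Ideal R) (q : ℕ) : J.radical ≤ (frobPow J q).radical :=
  radical_le_radical_iff.2 fun x hx => ⟨q, subset_span ⟨x, hx, rfl⟩⟩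

theorem bddAbove_setOf_not_pow_le {I F : Ideal R} (hI : I.FG) (h : I ≤ F.radical) :
    BddAbove {n | ¬ I ^ n ≤ F} := by
  obtain ⟨c, hc⟩ := exists_pow_le_of_le_radical_of_fg h hI
  exact ⟨c, fun n hn => not_lt.1 fun hcn => hn ((pow_le_pow_right hcn.le).trans hc)⟩

theorem le_pow_sInf_sub_one (I F : Ideal R) : F ≤ I ^ (sInf {n | ¬ F ≤ I ^ n} - 1) := by
  rcases Nat.eq_zero_or_pos (sInf {n | ¬ F ≤ I ^ n}) with h0 | h0
  · simp [h0]
  · exact not_not.1 (Nat.notMem_of_lt_sInf (Nat.sub_lt h0 one_pos))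

end Ideal

section LocalRing

variable {R : Type*} [CommRing R] [IsLocalRing R] [IsNoetherianRing R]

theorem isArtinianRing_quotient_of_le_radical {K : Ideal R} (hK : maximalIdeal R ≤ K.radical) :
    IsArtinianRing (R ⧸ K) := by
  rcases eq_or_ne K ⊤ with rfl | hK_ne
  · infer_instance
  have hrad : K.radical = maximalIdeal R :=
    le_antisymm (le_maximalIdeal (mt Ideal.radical_eq_top.1 hK_ne)) hK
  refine quotient_artinian_of_mem_minimalPrimes_of_isLocalRing K ?_
  rw [← Ideal.radical_minimalPrimes, hrad, Ideal.minimalPrimes_eq_subsingleton_self]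
  rfl

theorem length_quotient_smul_top_ne_top {M : Type*} [AddCommGroup M] [Module R M]
    [Module.Finite R M] {K : Ideal R} (hK : maximalIdeal R ≤ K.radical) :
    Module.length R (M ⧸ K • (⊤ : Submodule R M)) ≠ ⊤ := by
  have := isArtinianRing_quotient_of_le_radical hK
  rw [Module.length_eq_of_surjective (R := R ⧸ K) (S := R) Ideal.Quotient.mk_surjective]
  exact Module.length_ne_top

end LocalRing

section Asymptotics

variable {ι : Type*} {l : Filter ι}

theorem Filter.Tendsto.div_of_abs_sub_le {a b x : ι → ℝ} {σ : ℝ} (C : ℝ)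
    (ha : Tendsto (fun i => a i / x i) l (𝓝 σ)) (hx : Tendsto x l atTop)
    (hab : ∀ i, |b i - a i| ≤ C) :
    Tendsto (fun i => b i / x i) l (𝓝 σ) := by
  have hsmall : Tendsto (fun i => (b i - a i) / x i) l (𝓝 0) := by
    refine squeeze_zero_norm' ?_ ((tendsto_const_nhds (x := C)).div_atTop hx)
    filter_upwards [hx.eventually_gt_atTop 0] with i hi
    rw [Real.norm_eq_abs, abs_div, abs_of_pos hi]
    exact div_le_div_of_nonneg_right (hab i) hi.le
  simpa using (ha.add hsmall).congr fun i => by ring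

theorem Filter.Tendsto.comp_div_pow {L : ℕ → ℝ} {d : ℕ} {ℓ t : ℝ}
    (hL : Tendsto (fun n : ℕ => L n / (n : ℝ) ^ d) atTop (𝓝 ℓ)) {k : ι → ℕ} {x : ι → ℝ}
    (hx : Tendsto x l atTop) (ht : 0 < t) (hk : Tendsto (fun i => (k i : ℝ) / x i) l (𝓝 t)) :
    Tendsto (fun i => L (k i) / x i ^ d) l (𝓝 (t ^ d * ℓ)) := by
  have hk_top : Tendsto k l atTop := by
    refine tendsto_natCast_atTop_iff.1 ((hk.pos_mul_atTop ht hx).congr' ?_)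
    filter_upwards [hx.eventually_gt_atTop 0] with i hi
    field_simp
  refine ((hk.pow d).mul (hL.comp hk_top)).congr' ?_
  filter_upwards [hx.eventually_gt_atTop 0, hk_top.eventually_ge_atTop 1] with i hxi hki
  have : (k i : ℝ) ≠ 0 := by positivity
  rw [Function.comp_apply, div_pow]
  field_simp

end Asymptotics

section Thresholds

variable {R M : Type*} [CommRing R] [IsLocalRing R] [IsNoetherianRing R]
  [AddCommGroup M] [Module R M] [Module.Finite R M]
  {I : Ideal R} {F : ℕ → Ideal R} {q : ℕ → ℝ} {n : ℕ → ℕ} {d : ℕ} {s ℓ h : ℝ}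

theorem eq_pow_mul_of_le_lim_sInf (hI : maximalIdeal R ≤ I.radical)
    (hq : Tendsto q atTop atTop) (hs : 0 < s)
    (hn : Tendsto (fun e => (n e : ℝ) / q e) atTop (𝓝 s))
    (hℓ : Tendsto (fun k : ℕ => quotLen R M (I ^ k) / (k : ℝ) ^ d) atTop (𝓝 ℓ))
    (hh : Tendsto (fun e => quotLen R M (I ^ n e + F e) / q e ^ d) atTop (𝓝 h)) {σ : ℝ}
    (hσ : Tendsto (fun e => ((sInf {k | ¬ F e ≤ I ^ k} : ℕ) : ℝ) / q e) atTop (𝓝 σ))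
    (hsσ : s ≤ σ) :
    h = s ^ d * ℓ := by
  set μ := fun e => sInf {k | ¬ F e ≤ I ^ k}
  set m := fun e => min (n e) (μ e - 1)
  have hm : Tendsto (fun e => (m e : ℝ) / q e) atTop (𝓝 s) := by
    have hμ : Tendsto (fun e => ((μ e - 1 : ℕ) : ℝ) / q e) atTop (𝓝 σ) :=
      hσ.div_of_abs_sub_le 1 hq fun e => by
        simp only [μ]
        generalize sInf {k | ¬ F e ≤ I ^ k} = j
        rcases j with _ | j <;> simp
    refine (min_eq_left hsσ ▸ hn.min hμ).congr' ?_
    filter_upwards [hq.eventually_gt_atTop 0] with e he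
    simp only [m, Nat.cast_min, min_div_div_right he.le]
  have hfin : ∀ {K : Ideal R} (j : ℕ), I ^ j ≤ K →
      Module.length R (M ⧸ K • (⊤ : Submodule R M)) ≠ ⊤ := fun j hK =>
    length_quotient_smul_top_ne_top
      (hI.trans ((I.radical_le_radical_pow j).trans (Ideal.radical_mono hK)))
  refine le_antisymm (le_of_tendsto_of_tendsto hh (hℓ.comp_div_pow hq hs hn) ?_)
    (le_of_tendsto_of_tendsto (hℓ.comp_div_pow hq hs hm) hh ?_)
  all_goals filter_upwards [hq.eventually_gt_atTop 0] with e he; gcongr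
  · exact quotLen_le_quotLen_of_le le_sup_left (hfin _ le_rfl)
  · refine quotLen_le_quotLen_of_le (sup_le (Ideal.pow_le_pow_right (min_le_left _ _)) ?_)
      (hfin _ le_sup_left)
    exact (I.le_pow_sInf_sub_one (F e)).trans (Ideal.pow_le_pow_right (min_le_right _ _))

theorem eq_of_lim_sSup_le (hI : I.radical = maximalIdeal R)
    (hF : ∀ e, maximalIdeal R ≤ (F e).radical)
    (hq : Tendsto q atTop atTop) (hs : 0 < s)
    (hn : Tendsto (fun e => (n e : ℝ) / q e) atTop (𝓝 s))
    (hℓ : Tendsto (fun k : ℕ => quotLen R M (I ^ k) / (k : ℝ) ^ d) atTop (𝓝 ℓ)) {eHK : ℝ}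
    (hHK : Tendsto (fun e => quotLen R M (F e) / q e ^ d) atTop (𝓝 eHK))
    (hh : Tendsto (fun e => quotLen R M (I ^ n e + F e) / q e ^ d) atTop (𝓝 h)) {c : ℝ}
    (hc : Tendsto (fun e => ((sSup {k | ¬ I ^ k ≤ F e} : ℕ) : ℝ) / q e) atTop (𝓝 c))
    (hcs : c ≤ s) :
    h = eHK := by
  set ν := fun e => sSup {k | ¬ I ^ k ≤ F e}
  set n' := fun e => max (n e) (ν e + 1)
  have hn' : Tendsto (fun e => (n' e : ℝ) / q e) atTop (𝓝 s) := by
    have hν : Tendsto (fun e => ((ν e + 1 : ℕ) : ℝ) / q e) atTop (𝓝 c) :=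
      hc.div_of_abs_sub_le 1 hq fun e => by simp [ν]
    refine (max_eq_left hcs ▸ hn.max hν).congr' ?_
    filter_upwards [hq.eventually_gt_atTop 0] with e he
    simp only [n', Nat.cast_max, max_div_div_right he.le]
  have hIF : ∀ e, I ^ n' e ≤ F e := fun e => by
    by_contra hcon
    have hbdd := Ideal.bddAbove_setOf_not_pow_le (IsNoetherian.noetherian I)
      ((hI ▸ I.le_radical).trans (hF e))
    have : n' e ≤ ν e := le_csSup hbdd hcon
    have : ν e + 1 ≤ n' e := le_max_right _ _
    omega
  have hfin : ∀ m, Module.length R (M ⧸ (I ^ m) • (⊤ : Submodule R M)) ≠ ⊤ := fun m =>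
    length_quotient_smul_top_ne_top (hI.ge.trans (I.radical_le_radical_pow m))
  have hlower := (hHK.add (hℓ.comp_div_pow hq hs hn)).sub (hℓ.comp_div_pow hq hs hn')
  rw [add_sub_cancel_right] at hlower
  refine le_antisymm (le_of_tendsto_of_tendsto hh hHK ?_) (le_of_tendsto_of_tendsto hlower hh ?_)
  all_goals filter_upwards [hq.eventually_gt_atTop 0] with e he
  · gcongr
    exact quotLen_le_quotLen_of_le le_sup_right (length_quotient_smul_top_ne_top (hF e))
  · rw [← add_div, ← sub_div]
    gcongr
    linarith [quotLen_add_quotLen_le (M := M)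
      (Ideal.pow_le_pow_right (le_max_left _ _)) (hIF e) (hfin (n' e))]

end Thresholds

theorem h_eq_at_thresholds_general
    {R M : Type*} [CommRing R] [IsLocalRing R] [IsNoetherianRing R]
    [AddCommGroup M] [Module R M] [Module.Finite R M]
    (p : ℕ) [Fact p.Prime]
    (d : ℕ)
    (I J : Ideal R)
    (hI : I.radical = IsLocalRing.maximalIdeal R)
    (hJ : J.radical = IsLocalRing.maximalIdeal R)
    (s : ℝ) (hs : 0 < s)
    (eI eHK h sJI cJI : ℝ)
    (heI : Tendsto (fun n : ℕ => (d.factorial : ℝ) * quotLen R M (I ^ n) / (n : ℝ) ^ d)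
      atTop (nhds eI))
    (heHK : Tendsto (fun e : ℕ => quotLen R M (frobPow J (p ^ e)) / (p : ℝ) ^ (e * d))
      atTop (nhds eHK))
    (hh : Tendsto (fun e : ℕ =>
        quotLen R M (I ^ (⌈s * (p : ℝ) ^ e⌉.toNat) + frobPow J (p ^ e)) /
          (p : ℝ) ^ (e * d))
      atTop (nhds h))
    (hsJI : Tendsto (fun e : ℕ =>
        ((sInf {n : ℕ | ¬ frobPow J (p ^ e) ≤ I ^ n} : ℕ) : ℝ) / (p : ℝ) ^ e)
      atTop (nhds sJI))
    (hcJI : Tendsto (fun e : ℕ =>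
        ((sSup {n : ℕ | ¬ I ^ n ≤ frobPow J (p ^ e)} : ℕ) : ℝ) / (p : ℝ) ^ e)
      atTop (nhds cJI)) :
    (s ≤ sJI → h = s ^ d / d.factorial * eI) ∧ (cJI ≤ s → h = eHK) := by
  have hq : Tendsto (fun e : ℕ => (p : ℝ) ^ e) atTop atTop :=
    tendsto_pow_atTop_atTop_of_one_lt (by exact_mod_cast (Fact.out : p.Prime).one_lt)
  have hn : Tendsto (fun e : ℕ => ((⌈s * (p : ℝ) ^ e⌉.toNat : ℕ) : ℝ) / (p : ℝ) ^ e)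
      atTop (𝓝 s) := by
    simpa only [Int.ceil_toNat, Function.comp_def] using
      (tendsto_nat_ceil_mul_div_atTop hs.le).comp hq
  have hℓ : Tendsto (fun k : ℕ => quotLen R M (I ^ k) / (k : ℝ) ^ d) atTop
      (𝓝 (eI / d.factorial)) :=
    (heI.div_const _).congr fun k => by field_simp
  have hF : ∀ e, maximalIdeal R ≤ (frobPow J (p ^ e)).radical := fun e =>
    hJ ▸ J.radical_le_radical_frobPow _
  simp only [pow_mul] at heHK hh
  refine ⟨fun hsJ => ?_, fun hcJ => ?_⟩
  · rw [eq_pow_mul_of_le_lim_sInf hI.ge hq hs hn hℓ hh hsJI hsJ]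
    ring
  · exact eq_of_lim_sSup_le hI hF hq hs hn hℓ heHK hh hcJI hcJ

theorem h_eq_at_thresholds
    {R M : Type*} [CommRing R] [IsLocalRing R] [IsNoetherianRing R]
    [AddCommGroup M] [Module R M] [Module.Finite R M]
    (p : ℕ) [Fact p.Prime] [CharP R p]
    (d : ℕ) (hd : 1 ≤ d) (hdim : ringKrullDim R = d)
    (I J : Ideal R)
    (hI : I.radical = IsLocalRing.maximalIdeal R)
    (hJ : J.radical = IsLocalRing.maximalIdeal R)
    (s : ℝ) (hs : 0 < s)
    (eI eHK h sJI cJI : ℝ)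
    (heI : Tendsto (fun n : ℕ => (d.factorial : ℝ) * quotLen R M (I ^ n) / (n : ℝ) ^ d)
      atTop (nhds eI))
    (heHK : Tendsto (fun e : ℕ => quotLen R M (frobPow J (p ^ e)) / (p : ℝ) ^ (e * d))
      atTop (nhds eHK))
    (hh : Tendsto (fun e : ℕ =>
        quotLen R M (I ^ (⌈s * (p : ℝ) ^ e⌉.toNat) + frobPow J (p ^ e)) /
          (p : ℝ) ^ (e * d))
      atTop (nhds h))
    (hsJI : Tendsto (fun e : ℕ =>
        ((sInf {n : ℕ | ¬ frobPow J (p ^ e) ≤ I ^ n} : ℕ) : ℝ) / (p : ℝ) ^ e)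
      atTop (nhds sJI))
    (hcJI : Tendsto (fun e : ℕ =>
        ((sSup {n : ℕ | ¬ I ^ n ≤ frobPow J (p ^ e)} : ℕ) : ℝ) / (p : ℝ) ^ e)
      atTop (nhds cJI)) :
    (s ≤ sJI → h = s ^ d / d.factorial * eI) ∧ (cJI ≤ s → h = eHK) :=
  h_eq_at_thresholds_general p d I J hI hJ s hs eI eHK h sJI cJI heI heHK hh hsJI hcJI
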